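/- arXiv:2409.19772 — 2 statements merged into one kernel-verified Lean document; each statement's English description precedes it below -/
import Mathlib

section
/- Let $u_1,\dots,u_k \in \mathbb{R}$ be not all equal, and $c_1,\dots,c_k \in \mathbb{R}$. The minimizing slope $a$ of $\sum_{i=1}^k (a u_i + b + c_i)^2$ over $(a,b)$ satisfies $|a| \le \zeta(u) \max_i |c_i|$, where $\zeta(u) = 2\sum_{i<j}|u_i - u_j| / \sum_{i<j}(u_i - u_j)^2$. -/
open Finset

lemma lin_coeff_zero (L Q : ℝ) (hQ : 0 ≤ Q) (h : ∀ t : ℝ, 0 ≤ L * t + Q * t ^ 2) :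
    L = 0 := by
  by_contra hL
  have h1 := h (-L / (Q + 1))
  have hQ1 : (0:ℝ) < Q + 1 := by linarith
  have h2 : L * (-L / (Q + 1)) + Q * (-L / (Q + 1)) ^ 2 = -(L^2) / (Q+1)^2 := by
    field_simp; ring
  rw [h2] at h1
  have h3 : (0:ℝ) < L^2 / (Q+1)^2 := by positivity
  rw [neg_div] at h1
  linarith

lemma sym_pairs {k : ℕ} (f : Fin k → Fin k → ℝ) (hsym : ∀ i j, f i j = f j i)
    (hdiag : ∀ i, f i i = 0) :
    ∑ i, ∑ j, f i j
      = 2 * ∑ p ∈ Finset.univ.filter (fun p : Fin k × Fin k => p.1 < p.2), f p.1 p.2 := by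
  have h0 : ∑ i, ∑ j, f i j = ∑ p ∈ (univ : Finset (Fin k × Fin k)), f p.1 p.2 := by
    rw [← Finset.univ_product_univ, Finset.sum_product]
  rw [h0, ← Finset.sum_filter_add_sum_filter_not univ (fun p : Fin k × Fin k => p.1 < p.2)]
  have h1 : ∑ p ∈ Finset.univ.filter (fun p : Fin k × Fin k => ¬ p.1 < p.2), f p.1 p.2
      = ∑ p ∈ Finset.univ.filter (fun p : Fin k × Fin k => p.1 < p.2), f p.1 p.2 := by
    rw [← Finset.sum_filter_add_sum_filter_not (Finset.univ.filter
        (fun p : Fin k × Fin k => ¬ p.1 < p.2)) (fun p => p.2 < p.1)]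
    have h2 : ∑ p ∈ (Finset.univ.filter (fun p : Fin k × Fin k => ¬ p.1 < p.2)).filter
        (fun p => ¬ p.2 < p.1), f p.1 p.2 = 0 := by
      apply Finset.sum_eq_zero
      intro p hp
      simp only [Finset.mem_filter] at hp
      have : p.1 = p.2 := le_antisymm (not_lt.1 hp.2) (not_lt.1 hp.1.2)
      rw [this, hdiag]
    rw [h2, add_zero]
    apply Finset.sum_nbij' (fun p => Prod.swap p) (fun p => Prod.swap p)
    · intro p hp; simp only [Finset.mem_filter] at hp ⊢
      exact ⟨Finset.mem_univ _, hp.2⟩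
    · intro p hp; simp only [Finset.mem_filter] at hp ⊢
      exact ⟨⟨Finset.mem_univ _, not_lt.2 hp.2.le⟩, hp.2⟩
    · intro p _; simp
    · intro p _; simp
    · intro p _; exact (hsym p.1 p.2)
  rw [h1]; ring

lemma pair_expand {k : ℕ} (u v : Fin k → ℝ) :
    ∑ i, ∑ j, (u i - u j) * (v i - v j)
      = 2 * ((k:ℝ) * ∑ i, u i * v i - (∑ i, u i) * (∑ i, v i)) := by
  have h1 : ∑ i, ∑ j, (u i - u j) * (v i - v j)
      = ∑ i, ((k:ℝ) * (u i * v i) - u i * (∑ j, v j) - (∑ j, u j) * v i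
              + ∑ j, u j * v j) := by
    refine Finset.sum_congr rfl fun i _ => ?_
    calc ∑ j, (u i - u j) * (v i - v j)
        = ∑ j, (u i * v i - u i * v j - u j * v i + u j * v j) :=
          Finset.sum_congr rfl fun j _ => by ring
      _ = _ := by
          rw [Finset.sum_add_distrib, Finset.sum_sub_distrib, Finset.sum_sub_distrib,
            ← Finset.mul_sum, ← Finset.sum_mul, Finset.sum_const, Finset.card_univ,
            Fintype.card_fin, nsmul_eq_mul, ← Finset.mul_sum]
          ring
  rw [h1, Finset.sum_add_distrib, Finset.sum_sub_distrib, Finset.sum_sub_distrib,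
    ← Finset.mul_sum, ← Finset.sum_mul, ← Finset.mul_sum, Finset.sum_const,
    Finset.card_univ, Fintype.card_fin, nsmul_eq_mul]
  ring

/-- Bound on the least-squares slope in terms of the maximal offset. -/
theorem least_squares_slope_bound
    (k : ℕ) (u c : Fin k → ℝ) (hne : ∃ i j, u i ≠ u j)
    (a b : ℝ)
    (hmin : ∀ a' b' : ℝ,
      ∑ i, (a * u i + b + c i) ^ 2 ≤ ∑ i, (a' * u i + b' + c i) ^ 2) :
    |a| ≤ (2 * ∑ p ∈ Finset.univ.filter (fun p : Fin k × Fin k => p.1 < p.2),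
              |u p.1 - u p.2|) /
          (∑ p ∈ Finset.univ.filter (fun p : Fin k × Fin k => p.1 < p.2),
              (u p.1 - u p.2) ^ 2) *
        (⨆ i, |c i|) := by
  obtain ⟨i₀, j₀, hij⟩ := hne
  haveI : Nonempty (Fin k) := ⟨i₀⟩
  -- Normal equation 1 (derivative in a)
  have NE1 : a * (∑ i, (u i)^2) + b * (∑ i, u i) + (∑ i, u i * c i) = 0 := by
    have h : ∀ t : ℝ, 0 ≤ (2 * (a * (∑ i, (u i)^2) + b * (∑ i, u i) + (∑ i, u i * c i))) * t
        + (∑ i, (u i)^2) * t ^ 2 := by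
      intro t
      have hmm := hmin (a + t) b
      have hexp : ∑ i, ((a + t) * u i + b + c i) ^ 2
          = ∑ i, (a * u i + b + c i) ^ 2
            + ((2 * (a * (∑ i, (u i)^2) + b * (∑ i, u i) + (∑ i, u i * c i))) * t
              + (∑ i, (u i)^2) * t ^ 2) := by
        simp only [Finset.mul_sum, Finset.sum_mul, ← Finset.sum_add_distrib]
        exact Finset.sum_congr rfl fun i _ => by ring
      rw [hexp] at hmm
      linarith
    have := lin_coeff_zero _ _ (by positivity) h
    linarith
  -- Normal equation 2 (derivative in b)
  have NE2 : a * (∑ i, u i) + b * (k:ℝ) + (∑ i, c i) = 0 := by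
    have h : ∀ t : ℝ, 0 ≤ (2 * (a * (∑ i, u i) + b * (k:ℝ) + (∑ i, c i))) * t
        + (k:ℝ) * t ^ 2 := by
      intro t
      have hmm := hmin a (b + t)
      have hexp : ∑ i, (a * u i + (b + t) + c i) ^ 2
          = ∑ i, (a * u i + b + c i) ^ 2
            + ((2 * (a * (∑ i, u i) + b * (k:ℝ) + (∑ i, c i))) * t + (k:ℝ) * t ^ 2) := by
        have hk : (k:ℝ) = ∑ _i : Fin k, (1:ℝ) := by
          simp
        rw [hk]
        simp only [Finset.mul_sum, Finset.sum_mul, ← Finset.sum_add_distrib]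
        exact Finset.sum_congr rfl fun i _ => by ring
      rw [hexp] at hmm
      linarith
    have := lin_coeff_zero _ _ (by positivity) h
    linarith
  set P := Finset.univ.filter (fun p : Fin k × Fin k => p.1 < p.2) with hP
  set D := ∑ p ∈ P, (u p.1 - u p.2) ^ 2 with hDdef
  set N := ∑ p ∈ P, (u p.1 - u p.2) * (c p.1 - c p.2) with hNdef
  -- identities
  have hD : D = (k:ℝ) * (∑ i, u i * u i) - (∑ i, u i) * (∑ i, u i) := by
    have h1 := sym_pairs (fun i j => (u i - u j) * (u i - u j))
      (fun i j => by ring) (fun i => by ring)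
    have h2 := pair_expand u u
    have h3 : D = ∑ p ∈ P, (u p.1 - u p.2) * (u p.1 - u p.2) :=
      Finset.sum_congr rfl fun p _ => sq (u p.1 - u p.2) ▸ by ring
    rw [h3]
    rw [h1] at h2
    linarith
  have hN : N = (k:ℝ) * (∑ i, u i * c i) - (∑ i, u i) * (∑ i, c i) := by
    have h1 := sym_pairs (fun i j => (u i - u j) * (c i - c j))
      (fun i j => by ring) (fun i => by ring)
    have h2 := pair_expand u c
    rw [h1] at h2
    rw [hNdef]
    linarith
  -- slope formula
  have hsum_sq : (∑ i, u i * u i) = ∑ i, (u i)^2 := Finset.sum_congr rfl fun i _ => (sq (u i)).symm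
  have key : a * D = -N := by
    rw [hD, hN, hsum_sq]
    linear_combination (k:ℝ) * NE1 - (∑ i, u i) * NE2
  -- positivity of D
  have hij' : i₀ ≠ j₀ := fun h => hij (h ▸ rfl)
  have hDpos : 0 < D := by
    apply Finset.sum_pos'
    · intro p _; positivity
    · rcases lt_or_gt_of_ne hij' with h | h
      · exact ⟨(i₀, j₀), by simp [hP, h], by simpa using sq_pos_of_ne_zero (sub_ne_zero.2 hij)⟩
      · exact ⟨(j₀, i₀), by simp [hP, h], by simpa using sq_pos_of_ne_zero (sub_ne_zero.2 (Ne.symm hij))⟩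
  -- sup bound
  set M := ⨆ i, |c i| with hM
  have hMle : ∀ i, |c i| ≤ M := fun i => le_ciSup (f := fun i => |c i|) (Set.Finite.bddAbove (Set.finite_range _)) i
  have hM0 : 0 ≤ M := le_trans (abs_nonneg _) (hMle i₀)
  -- final bound
  have hNbound : |N| ≤ (∑ p ∈ P, |u p.1 - u p.2|) * (2 * M) := by
    calc |N| ≤ ∑ p ∈ P, |(u p.1 - u p.2) * (c p.1 - c p.2)| :=
          Finset.abs_sum_le_sum_abs _ _
      _ ≤ ∑ p ∈ P, |u p.1 - u p.2| * (2 * M) := by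
          apply Finset.sum_le_sum
          intro p _
          rw [abs_mul]
          apply mul_le_mul_of_nonneg_left _ (abs_nonneg _)
          calc |c p.1 - c p.2| ≤ |c p.1| + |c p.2| := abs_sub _ _
            _ ≤ M + M := add_le_add (hMle _) (hMle _)
            _ = 2 * M := by ring
      _ = (∑ p ∈ P, |u p.1 - u p.2|) * (2 * M) := by rw [Finset.sum_mul]
  rw [div_mul_eq_mul_div, le_div_iff₀ hDpos]
  calc |a| * D = |a| * |D| := by rw [abs_of_pos hDpos]
    _ = |a * D| := (abs_mul a D).symm
    _ = |N| := by rw [key, abs_neg]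
    _ ≤ (∑ p ∈ P, |u p.1 - u p.2|) * (2 * M) := hNbound
    _ = 2 * (∑ p ∈ P, |u p.1 - u p.2|) * M := by ring
end

section
/- Suppose samples $(\tau_j, v_j)$, $j = 1, \dots, k$, satisfy $v_j = m^\star \tau_j + b^\star + \psi_j$ with $|\psi_j| \le \varepsilon$, and the $\tau_j$ are not all equal. Let $(\hat m, \hat b)$ minimize $\sum_j (m\tau_j + b - v_j)^2$. Then $|\hat m - m^\star| \le \zeta(\tau)\,\varepsilon$ where $\zeta(\tau) = 2 \sum_{i<j}|\tau_i - \tau_j| / \sum_{i<j}(\tau_i - \tau_j)^2$, and $|\hat b - b^\star| \le \varepsilon + \zeta(\tau)\,\varepsilon\, \max_j |\tau_j|$. -/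
/-!
The least-squares residuals `rⱼ = m̂ τⱼ + b̂ - vⱼ` satisfy the normal equations `∑ r = 0` and
`∑ τ r = 0`, which together make `∑_{i<j} (τᵢ - τⱼ)(rᵢ - rⱼ) = k ∑ τ r - ∑ τ ∑ r` vanish.
Since `rᵢ - rⱼ = a (τᵢ - τⱼ) - (ψᵢ - ψⱼ)` with `a = m̂ - m⋆`, this gives
`a ∑_{i<j} (τᵢ - τⱼ)² = ∑_{i<j} (τᵢ - τⱼ)(ψᵢ - ψⱼ)`, at most `2ε ∑_{i<j} |τᵢ - τⱼ|` in absolute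
value. The normal equation `∑ r = 0` then exhibits `b̂ - b⋆` as the mean of `ψⱼ - a τⱼ`.
-/

open Finset

theorem eq_zero_of_forall_two_mul_mul_add_sq_mul_nonneg (s q : ℝ)
    (h : ∀ t : ℝ, 0 ≤ 2 * t * s + t ^ 2 * q) : s = 0 := by
  have hc : 0 < |q| + 1 := by positivity
  have ht := h (-s / (|q| + 1))
  have hneg : -(2 * (|q| + 1)) + q < 0 := by linarith [le_abs_self q]
  field_simp at ht
  have hs : s ^ 2 = 0 := by nlinarith [sq_nonneg s]
  exact pow_eq_zero_iff two_ne_zero |>.mp hs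

section
variable {ι : Type*} [Fintype ι]

theorem sum_mul_eq_zero_of_forall_sum_sq_le (r φ : ι → ℝ)
    (h : ∀ t : ℝ, ∑ j, r j ^ 2 ≤ ∑ j, (r j + t * φ j) ^ 2) : ∑ j, φ j * r j = 0 := by
  refine eq_zero_of_forall_two_mul_mul_add_sq_mul_nonneg _ (∑ j, φ j ^ 2) fun t => ?_
  have hexp : ∑ j, (r j + t * φ j) ^ 2
      = ∑ j, r j ^ 2 + (2 * t * ∑ j, φ j * r j + t ^ 2 * ∑ j, φ j ^ 2) := by
    simp only [mul_sum, ← sum_add_distrib]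
    exact sum_congr rfl fun j _ => by ring
  linarith [h t]

theorem line_fit_normal_equations (τ v : ι → ℝ) (m b : ℝ)
    (hmin : ∀ m' b' : ℝ, ∑ j, (m * τ j + b - v j) ^ 2 ≤ ∑ j, (m' * τ j + b' - v j) ^ 2) :
    ∑ j, (m * τ j + b - v j) = 0 ∧ ∑ j, τ j * (m * τ j + b - v j) = 0 := by
  constructor
  · simpa using sum_mul_eq_zero_of_forall_sum_sq_le (fun j => m * τ j + b - v j) (fun _ => 1)
      fun t => (hmin m (b + t)).trans_eq (sum_congr rfl fun j _ => by ring)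
  · exact sum_mul_eq_zero_of_forall_sum_sq_le (fun j => m * τ j + b - v j) τ
      fun t => (hmin (m + t) b).trans_eq (sum_congr rfl fun j _ => by ring)

theorem sum_sum_eq_two_mul_sum_lt [LinearOrder ι] {R : Type*} [NonAssocSemiring R]
    (g : ι → ι → R) (hsymm : ∀ i j, g i j = g j i) (hdiag : ∀ i, g i i = 0) :
    ∑ i, ∑ j, g i j = 2 * ∑ p ∈ univ.filter (fun p : ι × ι => p.1 < p.2), g p.1 p.2 := by
  have split : ∀ i j, g i j = (if i < j then g i j else 0) + (if j < i then g j i else 0) := by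
    intro i j
    rcases lt_trichotomy i j with h | rfl | h
    · simp [h, h.not_gt]
    · simp [hdiag]
    · simp [h, h.not_gt, hsymm i j]
  rw [sum_filter, Fintype.sum_prod_type' (fun i j => if i < j then g i j else 0)]
  simp_rw [sum_congr rfl fun i _ => sum_congr rfl fun j _ => split i j, sum_add_distrib]
  rw [sum_comm (f := fun i j => if j < i then g j i else 0), two_mul]

theorem sum_lt_sub_mul_sub_eq_zero [LinearOrder ι] (τ r : ι → ℝ) (h0 : ∑ j, r j = 0)
    (h1 : ∑ j, τ j * r j = 0) :
    ∑ p ∈ univ.filter (fun p : ι × ι => p.1 < p.2), (τ p.1 - τ p.2) * (r p.1 - r p.2) = 0 := by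
  have hsum : ∑ i, ∑ j, (τ i - τ j) * (r i - r j) = 0 := by
    simp only [sub_mul, mul_sub, sum_sub_distrib, sum_const, card_univ, nsmul_eq_mul,
      ← mul_sum, ← sum_mul, h0, h1]
    ring
  rw [sum_sum_eq_two_mul_sum_lt _ (fun i j => by ring) (fun i => by ring)] at hsum
  simpa using hsum

theorem sum_lt_sq_sub_pos [LinearOrder ι] (τ : ι → ℝ) (hne : ∃ i j, τ i ≠ τ j) :
    0 < ∑ p ∈ univ.filter (fun p : ι × ι => p.1 < p.2), (τ p.1 - τ p.2) ^ 2 := by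
  obtain ⟨i, j, hij⟩ := hne
  have hlt : ∀ i j, i < j → τ i ≠ τ j →
      ∃ p ∈ univ.filter (fun p : ι × ι => p.1 < p.2), 0 < (τ p.1 - τ p.2) ^ 2 :=
    fun i j h hτ => ⟨(i, j), by simpa using h, sq_pos_of_ne_zero (sub_ne_zero.mpr hτ)⟩
  refine sum_pos' (fun p _ => sq_nonneg _) ?_
  rcases lt_or_gt_of_ne (ne_of_apply_ne τ hij) with h | h
  · exact hlt i j h hij
  · exact hlt j i h hij.symm

theorem abs_slope_error_le [LinearOrder ι] (τ ψ : ι → ℝ) (a β ε : ℝ)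
    (h0 : ∑ j, (a * τ j + β - ψ j) = 0) (h1 : ∑ j, τ j * (a * τ j + β - ψ j) = 0)
    (hψ : ∀ j, |ψ j| ≤ ε)
    (hD : 0 < ∑ p ∈ univ.filter (fun p : ι × ι => p.1 < p.2), (τ p.1 - τ p.2) ^ 2) :
    |a| ≤ (2 * ∑ p ∈ univ.filter (fun p : ι × ι => p.1 < p.2), |τ p.1 - τ p.2|) /
      (∑ p ∈ univ.filter (fun p : ι × ι => p.1 < p.2), (τ p.1 - τ p.2) ^ 2) * ε := by
  set P := univ.filter (fun p : ι × ι => p.1 < p.2)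
  have haD : a * ∑ p ∈ P, (τ p.1 - τ p.2) ^ 2 = ∑ p ∈ P, (τ p.1 - τ p.2) * (ψ p.1 - ψ p.2) := by
    have h := sum_lt_sub_mul_sub_eq_zero τ _ h0 h1
    rw [mul_sum, ← sub_eq_zero, ← sum_sub_distrib, ← h]
    exact sum_congr rfl fun p _ => by ring
  rw [div_mul_eq_mul_div, le_div_iff₀ hD]
  calc |a| * ∑ p ∈ P, (τ p.1 - τ p.2) ^ 2 = |∑ p ∈ P, (τ p.1 - τ p.2) * (ψ p.1 - ψ p.2)| := by
        rw [← haD, abs_mul, abs_of_pos hD]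
    _ ≤ ∑ p ∈ P, |τ p.1 - τ p.2| * (2 * ε) := by
        refine (abs_sum_le_sum_abs _ _).trans (sum_le_sum fun p _ => ?_)
        rw [abs_mul]
        gcongr
        linarith [abs_sub (ψ p.1) (ψ p.2), hψ p.1, hψ p.2]
    _ = 2 * (∑ p ∈ P, |τ p.1 - τ p.2|) * ε := by rw [← sum_mul]; ring

theorem abs_intercept_error_le [Nonempty ι] (τ ψ : ι → ℝ) (a β ε M : ℝ)
    (h0 : ∑ j, (a * τ j + β - ψ j) = 0) (hψ : ∀ j, |ψ j| ≤ ε) (hτ : ∀ j, |τ j| ≤ M) :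
    |β| ≤ ε + |a| * M := by
  have hk : (0 : ℝ) < Fintype.card ι := by exact_mod_cast Fintype.card_pos
  have hβ : Fintype.card ι * β = ∑ j, (ψ j - a * τ j) := by
    simp only [sum_sub_distrib, sum_add_distrib, sum_const, card_univ, nsmul_eq_mul] at h0 ⊢
    linarith
  refine le_of_mul_le_mul_left ?_ hk
  calc Fintype.card ι * |β| = |∑ j, (ψ j - a * τ j)| := by rw [← hβ, abs_mul, abs_of_pos hk]
    _ ≤ ∑ j, |ψ j - a * τ j| := abs_sum_le_sum_abs _ _
    _ ≤ ∑ _j : ι, (ε + |a| * M) := sum_le_sum fun j _ => by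
        refine (abs_sub _ _).trans ?_
        rw [abs_mul]
        gcongr
        exacts [hψ j, hτ j]
    _ = Fintype.card ι * (ε + |a| * M) := by rw [sum_const, card_univ, nsmul_eq_mul]

end

/-- Least squares on noisy samples of a line recovers the slope and intercept
up to an error proportional to the noise level. -/
theorem noisy_regression_recovery
    (k : ℕ) (τ v ψ : Fin k → ℝ) (mstar bstar ε : ℝ)
    (hv : ∀ j, v j = mstar * τ j + bstar + ψ j)
    (hψ : ∀ j, |ψ j| ≤ ε)
    (hne : ∃ i j, τ i ≠ τ j)
    (mhat bhat : ℝ)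
    (hmin : ∀ m' b' : ℝ,
      ∑ j, (mhat * τ j + bhat - v j) ^ 2 ≤ ∑ j, (m' * τ j + b' - v j) ^ 2) :
    |mhat - mstar| ≤
        (2 * ∑ p ∈ Finset.univ.filter (fun p : Fin k × Fin k => p.1 < p.2),
            |τ p.1 - τ p.2|) /
          (∑ p ∈ Finset.univ.filter (fun p : Fin k × Fin k => p.1 < p.2),
            (τ p.1 - τ p.2) ^ 2) * ε ∧
    |bhat - bstar| ≤
        ε + (2 * ∑ p ∈ Finset.univ.filter (fun p : Fin k × Fin k => p.1 < p.2),
            |τ p.1 - τ p.2|) /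
          (∑ p ∈ Finset.univ.filter (fun p : Fin k × Fin k => p.1 < p.2),
            (τ p.1 - τ p.2) ^ 2) * ε * (⨆ j, |τ j|) := by
  obtain ⟨h0, h1⟩ := line_fit_normal_equations τ v mhat bhat hmin
  have hres : ∀ j, mhat * τ j + bhat - v j = (mhat - mstar) * τ j + (bhat - bstar) - ψ j :=
    fun j => by rw [hv j]; ring
  simp only [hres] at h0 h1
  have hslope := abs_slope_error_le τ ψ _ _ ε h0 h1 hψ (sum_lt_sq_sub_pos τ hne)
  refine ⟨hslope, ?_⟩
  have : Nonempty (Fin k) := ⟨hne.choose⟩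
  have hM : ∀ j, |τ j| ≤ ⨆ j, |τ j| := le_ciSup (Set.finite_range _).bddAbove
  calc |bhat - bstar| ≤ ε + |mhat - mstar| * ⨆ j, |τ j| :=
        abs_intercept_error_le τ ψ _ _ ε _ h0 hψ hM
    _ ≤ _ := by
      gcongr
      exact Real.iSup_nonneg fun j => abs_nonneg (τ j)
end
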